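/- arXiv:2410.07070 — 4 statements merged into one kernel-verified Lean document; each statement's English description precedes it below -/
import Mathlib

section
/- For every u > 1, the integral J(u) = ∫_{−π}^{π} cos(2p)/(u − cos p) dp satisfies J(u) = 2u ∫_0^{π/2} cos²(2p) / ((u² − cos² p)(u² − sin² p)) dp, and in particular J(u) > 0. -/
open Real intervalIntegral

theorem stmt_3 (u : ℝ) (hu : 1 < u) :
    (∫ p in (-π)..π, Real.cos (2 * p) / (u - Real.cos p)) =
      2 * u * ∫ p in (0:ℝ)..(π / 2),
        (Real.cos (2 * p)) ^ 2 / ((u ^ 2 - (Real.cos p) ^ 2) * (u ^ 2 - (Real.sin p) ^ 2)) ∧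
    0 < ∫ p in (-π)..π, Real.cos (2 * p) / (u - Real.cos p) := by
  have hu0 : 0 < u := lt_trans one_pos hu
  have hd1 : ∀ p : ℝ, 0 < u - Real.cos p := fun p =>
    sub_pos.mpr ((Real.cos_le_one p).trans_lt hu)
  have hd2 : ∀ p : ℝ, 0 < u + Real.cos p := fun p => by
    have := Real.neg_one_le_cos p; linarith
  have hd3 : ∀ p : ℝ, 0 < u ^ 2 - Real.cos p ^ 2 := fun p => by
    have h1 : Real.cos p ^ 2 ≤ 1 := Real.cos_sq_le_one p
    nlinarith
  have hd4 : ∀ p : ℝ, 0 < u ^ 2 - Real.sin p ^ 2 := fun p => by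
    have h1 : Real.sin p ^ 2 ≤ 1 := Real.sin_sq_le_one p
    nlinarith
  have ccos2 : Continuous fun p : ℝ => Real.cos (2 * p) :=
    Real.continuous_cos.comp (continuous_const.mul continuous_id)
  have c1 : Continuous fun p : ℝ => Real.cos (2 * p) / (u - Real.cos p) :=
    ccos2.div (continuous_const.sub Real.continuous_cos) fun p => (hd1 p).ne'
  have c2 : Continuous fun p : ℝ => Real.cos (2 * p) / (u + Real.cos p) :=
    ccos2.div (continuous_const.add Real.continuous_cos) fun p => (hd2 p).ne'
  have cg : Continuous fun p : ℝ => Real.cos (2 * p) / (u ^ 2 - Real.cos p ^ 2) :=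
    ccos2.div (continuous_const.sub (Real.continuous_cos.pow 2)) fun p => (hd3 p).ne'
  have cg' : Continuous fun p : ℝ => Real.cos (2 * p) / (u ^ 2 - Real.sin p ^ 2) :=
    ccos2.div (continuous_const.sub (Real.continuous_sin.pow 2)) fun p => (hd4 p).ne'
  have ch : Continuous fun p : ℝ =>
      Real.cos (2 * p) ^ 2 / ((u ^ 2 - Real.cos p ^ 2) * (u ^ 2 - Real.sin p ^ 2)) :=
    (ccos2.pow 2).div
      ((continuous_const.sub (Real.continuous_cos.pow 2)).mul
        (continuous_const.sub (Real.continuous_sin.pow 2)))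
      fun p => mul_ne_zero (hd3 p).ne' (hd4 p).ne'
  -- Step 1: fold [-π,π] to [0,π]
  have hneg : (∫ p in (-π)..(0:ℝ), Real.cos (2 * p) / (u - Real.cos p)) =
      ∫ p in (0:ℝ)..π, Real.cos (2 * p) / (u - Real.cos p) := by
    have h := intervalIntegral.integral_comp_neg
      (a := 0) (b := π) (fun p => Real.cos (2 * p) / (u - Real.cos p))
    simp only [neg_zero] at h
    rw [← h]
    simp only [mul_neg, Real.cos_neg]
  have hsplit1 : (∫ p in (-π)..π, Real.cos (2 * p) / (u - Real.cos p)) =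
      2 * ∫ p in (0:ℝ)..π, Real.cos (2 * p) / (u - Real.cos p) := by
    rw [← intervalIntegral.integral_add_adjacent_intervals
      (a := -π) (b := 0) (c := π) (c1.intervalIntegrable _ _) (c1.intervalIntegrable _ _),
      hneg]
    ring
  -- Step 2: fold [0,π] to [0,π/2]
  have hrefl : (∫ p in (π/2)..π, Real.cos (2 * p) / (u - Real.cos p)) =
      ∫ p in (0:ℝ)..(π/2), Real.cos (2 * p) / (u + Real.cos p) := by
    have h := intervalIntegral.integral_comp_sub_left
      (a := 0) (b := π/2) (fun p => Real.cos (2 * p) / (u - Real.cos p)) π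
    rw [sub_zero] at h
    have h2 : π - π / 2 = π / 2 := by ring
    rw [h2] at h
    rw [← h]
    apply intervalIntegral.integral_congr
    intro x _
    have e1 : 2 * (π - x) = 2 * π - 2 * x := by ring
    simp only [e1, Real.cos_pi_sub]
    rw [show (2:ℝ) * π - 2 * x = -(2 * x - 2 * π) by ring, Real.cos_neg,
      Real.cos_sub_two_pi, sub_neg_eq_add]
  have hsplit2 : (∫ p in (0:ℝ)..π, Real.cos (2 * p) / (u - Real.cos p)) =
      (∫ p in (0:ℝ)..(π/2), Real.cos (2 * p) / (u - Real.cos p)) +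
      ∫ p in (0:ℝ)..(π/2), Real.cos (2 * p) / (u + Real.cos p) := by
    rw [← intervalIntegral.integral_add_adjacent_intervals
      (a := (0:ℝ)) (b := π/2) (c := π) (c1.intervalIntegrable _ _) (c1.intervalIntegrable _ _),
      hrefl]
  have hcomb : (∫ p in (0:ℝ)..(π/2), Real.cos (2 * p) / (u - Real.cos p)) +
      (∫ p in (0:ℝ)..(π/2), Real.cos (2 * p) / (u + Real.cos p)) =
      2 * u * ∫ p in (0:ℝ)..(π/2), Real.cos (2 * p) / (u ^ 2 - Real.cos p ^ 2) := by
    rw [← intervalIntegral.integral_add (c1.intervalIntegrable _ _) (c2.intervalIntegrable _ _),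
      ← intervalIntegral.integral_const_mul]
    apply intervalIntegral.integral_congr
    intro x _
    have h1 := (hd1 x).ne'
    have h2 := (hd2 x).ne'
    have h3 := (hd3 x).ne'
    field_simp
    ring
  -- Step 3: fold on [0,π/2]
  have hrefl2 : (∫ p in (0:ℝ)..(π/2), Real.cos (2 * p) / (u ^ 2 - Real.cos p ^ 2)) =
      - ∫ p in (0:ℝ)..(π/2), Real.cos (2 * p) / (u ^ 2 - Real.sin p ^ 2) := by
    have h := intervalIntegral.integral_comp_sub_left
      (a := 0) (b := π/2) (fun p => Real.cos (2 * p) / (u ^ 2 - Real.cos p ^ 2)) (π/2)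
    rw [sub_zero, sub_self] at h
    rw [← h, ← intervalIntegral.integral_neg]
    apply intervalIntegral.integral_congr
    intro x _
    have e1 : 2 * (π / 2 - x) = π - 2 * x := by ring
    simp only [e1, Real.cos_pi_sub, Real.cos_pi_div_two_sub, neg_div]
  have hdouble : (∫ p in (0:ℝ)..(π/2),
      Real.cos (2 * p) ^ 2 / ((u ^ 2 - Real.cos p ^ 2) * (u ^ 2 - Real.sin p ^ 2))) =
      2 * ∫ p in (0:ℝ)..(π/2), Real.cos (2 * p) / (u ^ 2 - Real.cos p ^ 2) := by
    have : (∫ p in (0:ℝ)..(π/2),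
        Real.cos (2 * p) ^ 2 / ((u ^ 2 - Real.cos p ^ 2) * (u ^ 2 - Real.sin p ^ 2))) =
        (∫ p in (0:ℝ)..(π/2), Real.cos (2 * p) / (u ^ 2 - Real.cos p ^ 2)) -
        ∫ p in (0:ℝ)..(π/2), Real.cos (2 * p) / (u ^ 2 - Real.sin p ^ 2) := by
      rw [← intervalIntegral.integral_sub (cg.intervalIntegrable _ _) (cg'.intervalIntegrable _ _)]
      apply intervalIntegral.integral_congr
      intro x _
      have h3 := (hd3 x).ne'
      have h4 := (hd4 x).ne'
      have hc2 : Real.cos (2 * x) = Real.cos x ^ 2 - Real.sin x ^ 2 := by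
        have := Real.sin_sq_add_cos_sq x
        rw [Real.cos_two_mul]; linarith
      field_simp
      nlinarith [hc2]
    rw [this]
    have hneg2 : (∫ p in (0:ℝ)..(π/2), Real.cos (2 * p) / (u ^ 2 - Real.sin p ^ 2)) =
        - ∫ p in (0:ℝ)..(π/2), Real.cos (2 * p) / (u ^ 2 - Real.cos p ^ 2) := by
      rw [hrefl2]; ring
    rw [hneg2]; ring
  have hmain : (∫ p in (-π)..π, Real.cos (2 * p) / (u - Real.cos p)) =
      2 * u * ∫ p in (0:ℝ)..(π / 2),
        Real.cos (2 * p) ^ 2 / ((u ^ 2 - Real.cos p ^ 2) * (u ^ 2 - Real.sin p ^ 2)) := by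
    rw [hsplit1, hsplit2, hcomb, hdouble]; ring
  refine ⟨hmain, ?_⟩
  rw [hmain]
  have hpos : 0 < ∫ p in (0:ℝ)..(π / 2),
      Real.cos (2 * p) ^ 2 / ((u ^ 2 - Real.cos p ^ 2) * (u ^ 2 - Real.sin p ^ 2)) := by
    have hsplit : (∫ p in (0:ℝ)..(π/2),
        Real.cos (2 * p) ^ 2 / ((u ^ 2 - Real.cos p ^ 2) * (u ^ 2 - Real.sin p ^ 2))) =
        (∫ p in (0:ℝ)..(π/4),
          Real.cos (2 * p) ^ 2 / ((u ^ 2 - Real.cos p ^ 2) * (u ^ 2 - Real.sin p ^ 2))) +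
        ∫ p in (π/4)..(π/2),
          Real.cos (2 * p) ^ 2 / ((u ^ 2 - Real.cos p ^ 2) * (u ^ 2 - Real.sin p ^ 2)) := by
      rw [intervalIntegral.integral_add_adjacent_intervals
        (ch.intervalIntegrable _ _) (ch.intervalIntegrable _ _)]
    rw [hsplit]
    have hπ : 0 < π := Real.pi_pos
    have h1 : 0 < ∫ p in (0:ℝ)..(π/4),
        Real.cos (2 * p) ^ 2 / ((u ^ 2 - Real.cos p ^ 2) * (u ^ 2 - Real.sin p ^ 2)) := by
      apply intervalIntegral.intervalIntegral_pos_of_pos_on (ch.intervalIntegrable _ _)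
      · intro x hx
        apply div_pos
        · have hc : 0 < Real.cos (2 * x) := by
            apply Real.cos_pos_of_mem_Ioo
            constructor <;> [linarith [hx.1]; linarith [hx.2]]
          exact pow_pos hc 2
        · exact mul_pos (hd3 x) (hd4 x)
      · linarith
    have h2 : 0 ≤ ∫ p in (π/4)..(π/2),
        Real.cos (2 * p) ^ 2 / ((u ^ 2 - Real.cos p ^ 2) * (u ^ 2 - Real.sin p ^ 2)) := by
      apply intervalIntegral.integral_nonneg (by linarith)
      intro x _
      exact div_nonneg (sq_nonneg _) (mul_pos (hd3 x) (hd4 x)).le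
    linarith
  exact mul_pos (by linarith) hpos
end

section
/- For every u > 1, the integral ∫_{−π}^{π} cos(2p)/(u − cos p) dp is strictly positive. -/
open Real intervalIntegral

theorem stmt_4 (u : ℝ) (hu : 1 < u) :
    0 < ∫ p in (-π)..π, Real.cos (2 * p) / (u - Real.cos p) := by
  set f : ℝ → ℝ := fun p => Real.cos (2 * p) / (u - Real.cos p) with hf
  have hden : ∀ p : ℝ, 0 < u - Real.cos p := fun p =>
    sub_pos.2 (lt_of_le_of_lt (Real.cos_le_one p) hu)
  have hc : Continuous f := by
    apply Continuous.div
    · exact Real.continuous_cos.comp (continuous_const.mul continuous_id)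
    · exact continuous_const.sub Real.continuous_cos
    · intro p; exact (hden p).ne'
  have hint : ∀ a b : ℝ, IntervalIntegrable f MeasureTheory.volume a b :=
    fun a b => hc.intervalIntegrable a b
  have hpi : (0:ℝ) < π := Real.pi_pos
  -- even reflection: ∫_{-π}^0 = ∫_0^π
  have hneg : (∫ p in (-π)..(0:ℝ), f p) = ∫ p in (0:ℝ)..π, f p := by
    have h := intervalIntegral.integral_comp_neg (a := (0:ℝ)) (b := π) f
    simp only [neg_zero] at h
    rw [← h]
    apply intervalIntegral.integral_congr
    intro x _
    simp [hf, mul_neg, Real.cos_neg]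
  have hsplit1 : (∫ p in (-π)..π, f p) = 2 * ∫ p in (0:ℝ)..π, f p := by
    rw [← intervalIntegral.integral_add_adjacent_intervals (hint (-π) 0) (hint 0 π), hneg]
    ring
  -- reflection about π/2
  have hrefl1 : (∫ p in (π/2)..π, f p) = ∫ p in (0:ℝ)..(π/2), f (π - p) := by
    have h := intervalIntegral.integral_comp_sub_left (a := (0:ℝ)) (b := π/2) f π
    rw [sub_zero] at h
    have h2 : π - π/2 = π/2 := by ring
    rw [h2] at h
    exact h.symm
  have hsplit2 : (∫ p in (0:ℝ)..π, f p)
      = ∫ p in (0:ℝ)..(π/2), (f p + f (π - p)) := by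
    rw [← intervalIntegral.integral_add_adjacent_intervals (hint 0 (π/2)) (hint (π/2) π),
      hrefl1, ← intervalIntegral.integral_add (hint 0 (π/2))]
    exact (hc.comp (continuous_const.sub continuous_id)).intervalIntegrable 0 (π/2)
  set g : ℝ → ℝ := fun p => f p + f (π - p) with hg
  have hgc : Continuous g := hc.add (hc.comp (continuous_const.sub continuous_id))
  have hgint : ∀ a b : ℝ, IntervalIntegrable g MeasureTheory.volume a b :=
    fun a b => hgc.intervalIntegrable a b
  -- reflection about π/4
  have hrefl2 : (∫ p in (π/4)..(π/2), g p) = ∫ p in (0:ℝ)..(π/4), g (π/2 - p) := by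
    have h := intervalIntegral.integral_comp_sub_left (a := (0:ℝ)) (b := π/4) g (π/2)
    rw [sub_zero] at h
    have h2 : π/2 - π/4 = π/4 := by ring
    rw [h2] at h
    exact h.symm
  have hsplit3 : (∫ p in (0:ℝ)..(π/2), g p)
      = ∫ p in (0:ℝ)..(π/4), (g p + g (π/2 - p)) := by
    rw [← intervalIntegral.integral_add_adjacent_intervals (hgint 0 (π/4)) (hgint (π/4) (π/2)),
      hrefl2, ← intervalIntegral.integral_add (hgint 0 (π/4))]
    exact (hgc.comp (continuous_const.sub continuous_id)).intervalIntegrable 0 (π/4)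
  rw [hsplit1, hsplit2, hsplit3]
  have hpos : 0 < ∫ p in (0:ℝ)..(π/4), (g p + g (π/2 - p)) := by
    apply intervalIntegral.intervalIntegral_pos_of_pos_on
    · exact (hgc.add (hgc.comp (continuous_const.sub continuous_id))).intervalIntegrable 0 (π/4)
    · intro p hp
      obtain ⟨hp0, hp4⟩ := hp
      set c := Real.cos p with hcp
      set s := Real.sin p with hsp
      have huc : 0 < u - c := hden p
      have huc' : 0 < u + c := by
        have := Real.neg_one_le_cos p; rw [← hcp] at this; linarith
      have hus : 0 < u - s := by
        have := Real.sin_le_one p; rw [← hsp] at this; linarith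
      have hus' : 0 < u + s := by
        have := Real.neg_one_le_sin p; rw [← hsp] at this; linarith
      have ht : 0 < Real.cos (2 * p) :=
        Real.cos_pos_of_mem_Ioo ⟨by linarith, by linarith⟩
      -- simplify each term
      have e1 : f p = Real.cos (2*p) / (u - c) := rfl
      have e2 : f (π - p) = Real.cos (2*p) / (u + c) := by
        have : 2 * (π - p) = 2*π - 2*p := by ring
        simp only [hf, this, Real.cos_sub, Real.cos_two_pi, Real.sin_two_pi, Real.cos_pi_sub,
          Real.cos_pi, Real.sin_pi]
        ring_nf
        rw [hcp]
      have e3 : f (π/2 - p) = -(Real.cos (2*p)) / (u - s) := by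
        have : 2 * (π/2 - p) = π - 2*p := by ring
        rw [hf]
        simp only [this, Real.cos_pi_sub, Real.cos_pi_div_two_sub]
        rw [hsp]
      have e4 : f (π - (π/2 - p)) = -(Real.cos (2*p)) / (u + s) := by
        have h1 : π - (π/2 - p) = π/2 + p := by ring
        have h2 : 2 * (π/2 + p) = π + 2*p := by ring
        have h3 : Real.cos (π + 2*p) = -Real.cos (2*p) := by
          rw [Real.cos_add]; simp
        have h4 : Real.cos (π/2 + p) = -s := by
          rw [Real.cos_add]; simp [hsp]
        rw [hf]
        simp only [h1, h2, h3, h4, sub_neg_eq_add]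
      have hval : g p + g (π/2 - p)
          = Real.cos (2*p) / (u - c) + Real.cos (2*p) / (u + c)
            + (-(Real.cos (2*p)) / (u - s) + -(Real.cos (2*p)) / (u + s)) := by
        simp only [hg, e1, e2, e3, e4]
      rw [hval]
      have hid : c^2 - s^2 = Real.cos (2*p) := (Real.cos_two_mul' p).symm
      have key : Real.cos (2*p) / (u - c) + Real.cos (2*p) / (u + c)
            + (-(Real.cos (2*p)) / (u - s) + -(Real.cos (2*p)) / (u + s))
          = 2 * u * Real.cos (2*p) * (c^2 - s^2)
            / ((u - c) * (u + c) * (u - s) * (u + s)) := by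
        field_simp
        ring
      rw [key, hid]
      have hu0 : (0:ℝ) < u := by linarith
      positivity
    · linarith
  positivity
end

section
/- For every z < 0, the double integral a₁₃(z) = (1/(8π²)) ∫_{[−π,π]²} (cos 2p₁ + cos 2p₂)/(4 − z − 2cos p₁ − 2cos p₂) dp₁ dp₂ is strictly positive. -/
open Real intervalIntegral

section helpers
open MeasureTheory Set

set_option maxHeartbeats 1000000

lemma cos_two_int : ∫ p in (-π)..π, Real.cos (2*p) = 0 := by
  have : ∀ p : ℝ, HasDerivAt (fun x => Real.sin (2*x) / 2) (Real.cos (2*p)) p := by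
    intro p
    have h := ((Real.hasDerivAt_sin (2*p)).comp p ((hasDerivAt_id p).const_mul 2)).div_const 2
    simpa [mul_comm] using h
  rw [intervalIntegral.integral_eq_sub_of_hasDerivAt (fun p _ => this p)
    (by apply Continuous.intervalIntegrable; fun_prop)]
  rw [show (2:ℝ)*-π = -(2*π) by ring]
  simp [Real.sin_two_pi]

lemma key (a : ℝ) (ha : 2 < a) :
    0 < ∫ p in (-π)..π, Real.cos (2*p) / (a - 2 * Real.cos p) := by
  have hd : ∀ p : ℝ, 0 < a - 2 * Real.cos p := by
    intro p; nlinarith [Real.cos_le_one p, Real.neg_one_le_cos p]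
  have hd' : ∀ p : ℝ, 0 < a + 2 * Real.cos p := by
    intro p; nlinarith [Real.cos_le_one p, Real.neg_one_le_cos p]
  set g : ℝ → ℝ := fun p => Real.cos (2*p) / (a - 2 * Real.cos p) with hg
  have hgc : Continuous g := by
    apply Continuous.div (by fun_prop) (by fun_prop)
    intro p; exact (hd p).ne'
  -- shift identity
  have hper : Function.Periodic g (2*π) := by
    intro p; simp only [hg]
    rw [show 2*(p + 2*π) = 2*p + 2*π + 2*π by ring, Real.cos_add_two_pi, Real.cos_add_two_pi,
      Real.cos_add_two_pi]
  have hshift : (∫ p in (-π)..π, g p) = ∫ p in (-π)..π, g (p + π) := by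
    rw [intervalIntegral.integral_comp_add_right g π, show -π + π = (0:ℝ) by ring,
      show π + π = 2*π by ring]
    have h := hper.intervalIntegral_add_eq (-π) 0
    simp only [zero_add] at h
    rw [show -π + 2*π = π by ring] at h
    exact h
  set b : ℝ := a^2 - 2 with hb
  have hB : ∀ p : ℝ, 0 < b - 2 * Real.cos (2*p) := by
    intro p
    have : b - 2 * Real.cos (2*p) = (a - 2*Real.cos p) * (a + 2*Real.cos p) := by
      rw [Real.cos_two_mul]; ring
    rw [this]; exact mul_pos (hd p) (hd' p)
  have hsum : ∀ p : ℝ, g p + g (p + π) =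
      a * Real.cos (2*p) / (b - 2 * Real.cos (2*p)) * 2 := by
    intro p
    simp only [hg]
    rw [show 2*(p+π) = 2*p + 2*π by ring, Real.cos_add_two_pi, Real.cos_add_pi]
    have e1 : a - 2 * -Real.cos p = a + 2 * Real.cos p := by ring
    rw [e1]
    have h2 : b - 2 * Real.cos (2*p) = (a - 2*Real.cos p) * (a + 2*Real.cos p) := by
      rw [Real.cos_two_mul]; ring
    field_simp [(hd p).ne', (hd' p).ne', (hB p).ne']
    rw [Real.cos_two_mul]; ring
  have h2I : (∫ p in (-π)..π, g p) =
      ∫ p in (-π)..π, a * Real.cos (2*p) / (b - 2 * Real.cos (2*p)) := by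
    have hint : IntervalIntegrable (fun p => a * Real.cos (2*p) / (b - 2 * Real.cos (2*p)))
        volume (-π) π := by
      apply Continuous.intervalIntegrable
      apply Continuous.div (by fun_prop) (by fun_prop)
      intro p; exact (hB p).ne'
    have : (∫ p in (-π)..π, g p) + ∫ p in (-π)..π, g p
        = (∫ p in (-π)..π, a * Real.cos (2*p) / (b - 2 * Real.cos (2*p))) * 2 := by
      nth_rewrite 2 [hshift]
      have hc' : Continuous fun p : ℝ => g (p + π) := hgc.comp (continuous_id.add continuous_const)
      rw [← intervalIntegral.integral_add (hgc.intervalIntegrable _ _)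
        (hc'.intervalIntegrable _ _), ← intervalIntegral.integral_mul_const]
      exact intervalIntegral.integral_congr fun p _ => hsum p
    linarith
  rw [h2I]
  -- subtract (a/b) * ∫ cos 2p  (which is 0)
  have hbpos : 0 < b := by nlinarith
  have hfinal : (∫ p in (-π)..π, a * Real.cos (2*p) / (b - 2 * Real.cos (2*p)))
      = ∫ p in (-π)..π, 2 * a * (Real.cos (2*p))^2 / (b * (b - 2 * Real.cos (2*p))) := by
    have hint1 : IntervalIntegrable (fun p => a * Real.cos (2*p) / (b - 2 * Real.cos (2*p)))
        volume (-π) π := by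
      apply Continuous.intervalIntegrable
      apply Continuous.div (by fun_prop) (by fun_prop)
      intro p; exact (hB p).ne'
    have hint2 : IntervalIntegrable (fun p => (a/b) * Real.cos (2*p)) volume (-π) π := by
      apply Continuous.intervalIntegrable; continuity
    have hz : (∫ p in (-π)..π, (a/b) * Real.cos (2*p)) = 0 := by
      rw [intervalIntegral.integral_const_mul, cos_two_int, mul_zero]
    rw [← sub_zero (∫ p in (-π)..π, a * Real.cos (2*p) / (b - 2 * Real.cos (2*p))), ← hz,
      ← intervalIntegral.integral_sub hint1 hint2]
    apply intervalIntegral.integral_congr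
    intro p _
    have h1 := (hB p).ne'
    field_simp
    ring
  rw [hfinal]
  -- positivity
  have hnn : ∀ p : ℝ, 0 ≤ 2 * a * (Real.cos (2*p))^2 / (b * (b - 2 * Real.cos (2*p))) := by
    intro p
    apply div_nonneg (by positivity)
    exact le_of_lt (mul_pos hbpos (hB p))
  have hic : Continuous fun p => 2 * a * (Real.cos (2*p))^2 / (b * (b - 2 * Real.cos (2*p))) := by
    apply Continuous.div (by fun_prop) (by fun_prop)
    intro p; exact (mul_pos hbpos (hB p)).ne'
  have hpi : (0:ℝ) < π := Real.pi_pos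
  have hsplit : (∫ p in (-π)..π, 2 * a * (Real.cos (2*p))^2 / (b * (b - 2 * Real.cos (2*p))))
      = (∫ p in (-π)..(-(π/4)), 2 * a * (Real.cos (2*p))^2 / (b * (b - 2 * Real.cos (2*p))))
      + (∫ p in (-(π/4))..(π/4), 2 * a * (Real.cos (2*p))^2 / (b * (b - 2 * Real.cos (2*p))))
      + (∫ p in (π/4)..π, 2 * a * (Real.cos (2*p))^2 / (b * (b - 2 * Real.cos (2*p)))) := by
    rw [intervalIntegral.integral_add_adjacent_intervals (hic.intervalIntegrable _ _)
      (hic.intervalIntegrable _ _),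
      intervalIntegral.integral_add_adjacent_intervals (hic.intervalIntegrable _ _)
      (hic.intervalIntegrable _ _)]
  rw [hsplit]
  have hmid : 0 < ∫ p in (-(π/4))..(π/4), 2 * a * (Real.cos (2*p))^2 / (b * (b - 2 * Real.cos (2*p))) := by
    apply intervalIntegral.intervalIntegral_pos_of_pos_on (hic.intervalIntegrable _ _)
    · intro p hp
      have hcpos : 0 < Real.cos (2*p) := by
        apply Real.cos_pos_of_mem_Ioo
        constructor <;> [nlinarith [hp.1]; nlinarith [hp.2]]
      exact div_pos (mul_pos (by linarith) (pow_pos hcpos 2)) (mul_pos hbpos (hB p))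
    · linarith
  have h1 : 0 ≤ ∫ p in (-π)..(-(π/4)), 2 * a * (Real.cos (2*p))^2 / (b * (b - 2 * Real.cos (2*p))) :=
    intervalIntegral.integral_nonneg (by linarith) (fun p _ => hnn p)
  have h3 : 0 ≤ ∫ p in (π/4)..π, 2 * a * (Real.cos (2*p))^2 / (b * (b - 2 * Real.cos (2*p))) :=
    intervalIntegral.integral_nonneg (by linarith) (fun p _ => hnn p)
  linarith

theorem stmt_5 (z : ℝ) (hz : z < 0) :
    0 < (1 / (8 * π ^ 2)) * ∫ p₁ in (-π)..π, ∫ p₂ in (-π)..π,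
      (Real.cos (2 * p₁) + Real.cos (2 * p₂)) /
        (4 - z - 2 * Real.cos p₁ - 2 * Real.cos p₂) := by
  have hpi : (0:ℝ) < π := Real.pi_pos
  have hle : -π ≤ π := by linarith
  have hA : ∀ p : ℝ, 2 < 4 - z - 2 * Real.cos p := by
    intro p; nlinarith [Real.cos_le_one p]
  have hD : ∀ p q : ℝ, 0 < 4 - z - 2 * Real.cos p - 2 * Real.cos q := by
    intro p q; nlinarith [Real.cos_le_one p, Real.cos_le_one q]
  -- continuity facts
  have hDc : Continuous fun q : ℝ × ℝ => 4 - z - 2 * Real.cos q.1 - 2 * Real.cos q.2 := by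
    fun_prop
  have hGc : Continuous fun q : ℝ × ℝ =>
      Real.cos (2 * q.1) / (4 - z - 2 * Real.cos q.1 - 2 * Real.cos q.2) :=
    Continuous.div (by fun_prop) hDc (fun q => (hD q.1 q.2).ne')
  have hHc : Continuous fun q : ℝ × ℝ =>
      Real.cos (2 * q.2) / (4 - z - 2 * Real.cos q.1 - 2 * Real.cos q.2) :=
    Continuous.div (by fun_prop) hDc (fun q => (hD q.1 q.2).ne')
  have hFc : Continuous fun q : ℝ × ℝ =>
      (Real.cos (2 * q.1) + Real.cos (2 * q.2)) /
        (4 - z - 2 * Real.cos q.1 - 2 * Real.cos q.2) :=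
    Continuous.div (by fun_prop) hDc (fun q => (hD q.1 q.2).ne')
  -- define u, v
  set u : ℝ → ℝ := fun p₁ => ∫ p₂ in (-π)..π,
    Real.cos (2 * p₁) / (4 - z - 2 * Real.cos p₁ - 2 * Real.cos p₂) with hu
  set v : ℝ → ℝ := fun p₁ => ∫ p₂ in (-π)..π,
    Real.cos (2 * p₂) / (4 - z - 2 * Real.cos p₁ - 2 * Real.cos p₂) with hv
  have huc : Continuous u := by
    apply intervalIntegral.continuous_parametric_intervalIntegral_of_continuous'
    rw [Function.uncurry_def]; exact hGc
  have hvc : Continuous v := by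
    apply intervalIntegral.continuous_parametric_intervalIntegral_of_continuous'
    rw [Function.uncurry_def]; exact hHc
  -- inner split
  have hinner : ∀ p₁ : ℝ, (∫ p₂ in (-π)..π,
      (Real.cos (2 * p₁) + Real.cos (2 * p₂)) /
        (4 - z - 2 * Real.cos p₁ - 2 * Real.cos p₂)) = u p₁ + v p₁ := by
    intro p₁
    have h1 : IntervalIntegrable (fun p₂ =>
        Real.cos (2 * p₁) / (4 - z - 2 * Real.cos p₁ - 2 * Real.cos p₂)) volume (-π) π :=
      ((hGc.comp (Continuous.prodMk_right p₁)).intervalIntegrable _ _)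
    have h2 : IntervalIntegrable (fun p₂ =>
        Real.cos (2 * p₂) / (4 - z - 2 * Real.cos p₁ - 2 * Real.cos p₂)) volume (-π) π :=
      ((hHc.comp (Continuous.prodMk_right p₁)).intervalIntegrable _ _)
    rw [hu, hv, ← intervalIntegral.integral_add h1 h2]
    apply intervalIntegral.integral_congr
    intro p₂ _
    simp only [add_div]
  have hsplit : (∫ p₁ in (-π)..π, ∫ p₂ in (-π)..π,
      (Real.cos (2 * p₁) + Real.cos (2 * p₂)) /
        (4 - z - 2 * Real.cos p₁ - 2 * Real.cos p₂))
      = (∫ p₁ in (-π)..π, u p₁) + ∫ p₁ in (-π)..π, v p₁ := by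
    rw [← intervalIntegral.integral_add (huc.intervalIntegrable _ _)
      (hvc.intervalIntegrable _ _)]
    exact intervalIntegral.integral_congr fun p₁ _ => hinner p₁
  -- ∫ v > 0
  have hvpos : ∀ p₁ : ℝ, 0 < v p₁ := fun p₁ => key _ (hA p₁)
  have hIv : 0 < ∫ p₁ in (-π)..π, v p₁ :=
    intervalIntegral.intervalIntegral_pos_of_pos (hvc.intervalIntegrable _ _) hvpos
      (by linarith)
  -- Fubini for ∫ u
  have hswap : (∫ p₁ in (-π)..π, u p₁) = ∫ p₂ in (-π)..π, ∫ p₁ in (-π)..π,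
      Real.cos (2 * p₁) / (4 - z - 2 * Real.cos p₁ - 2 * Real.cos p₂) := by
    simp only [hu, intervalIntegral.integral_of_le hle]
    apply MeasureTheory.integral_integral_swap
    have hint : IntegrableOn (fun q : ℝ × ℝ =>
        Real.cos (2 * q.1) / (4 - z - 2 * Real.cos q.1 - 2 * Real.cos q.2))
        ((Ioc (-π) π) ×ˢ (Ioc (-π) π)) (volume.prod volume) := by
      apply IntegrableOn.mono_set (t := (Icc (-π) π) ×ˢ (Icc (-π) π))
      · exact (hGc.continuousOn).integrableOn_compact (isCompact_Icc.prod isCompact_Icc)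
      · exact Set.prod_mono Ioc_subset_Icc_self Ioc_subset_Icc_self
    rw [Function.uncurry_def, Measure.prod_restrict]
    exact hint
  -- positivity of ∫ u
  set w : ℝ → ℝ := fun p₂ => ∫ p₁ in (-π)..π,
    Real.cos (2 * p₁) / (4 - z - 2 * Real.cos p₁ - 2 * Real.cos p₂) with hw
  have hwc : Continuous w := by
    apply intervalIntegral.continuous_parametric_intervalIntegral_of_continuous'
    rw [Function.uncurry_def]
    exact Continuous.div (by fun_prop) (by fun_prop) (fun q => (hD q.2 q.1).ne')
  have hwpos : ∀ p₂ : ℝ, 0 < w p₂ := by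
    intro p₂
    have heq : w p₂ = ∫ p₁ in (-π)..π,
        Real.cos (2 * p₁) / ((4 - z - 2 * Real.cos p₂) - 2 * Real.cos p₁) := by
      apply intervalIntegral.integral_congr
      intro p₁ _
      ring_nf
    rw [heq]
    exact key _ (hA p₂)
  have hIu : 0 < ∫ p₁ in (-π)..π, u p₁ := by
    rw [hswap]
    exact intervalIntegral.intervalIntegral_pos_of_pos (hwc.intervalIntegrable _ _) hwpos
      (by linarith)
  rw [hsplit]
  have h8 : (0:ℝ) < 1 / (8 * π ^ 2) := by positivity
  exact mul_pos h8 (by linarith)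

end helpers
end

section
/- For every z < 0, the double integral a₁₄(z) = (1/(8π²)) ∫_{[−π,π]²} (2 cos p₁ cos p₂)/(4 − z − 2cos p₁ − 2cos p₂) dp₁ dp₂ is strictly positive, and it admits the representation a₁₄(z) = (1/(2π²)) ∫_0^π ∫_0^π (4−z) cos² q₁ cos² q₂ / ([((4−z)/2 − cos q₁)² − cos² q₂][((4−z)/2 + cos q₁)² − cos² q₂]) dq₁ dq₂. -/
set_option linter.unnecessarySimpa false

open Real intervalIntegral MeasureTheory

namespace Stmt6Aux

noncomputable def Fc (z c d : ℝ) : ℝ := 2 * c * d / (4 - z - 2 * c - 2 * d)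

noncomputable def Gc (z c d : ℝ) : ℝ :=
  (4 - z) * c ^ 2 * d ^ 2 /
    (((4 - z) / 2 - c) ^ 2 - d ^ 2) / ((((4 - z) / 2 + c) ^ 2 - d ^ 2))

lemma even_int (f : ℝ → ℝ) (hf : IntervalIntegrable f volume (-π) π)
    (he : ∀ x, f (-x) = f x) :
    (∫ x in (-π)..π, f x) = 2 * ∫ x in (0:ℝ)..π, f x := by
  have h0 : (∫ x in (0:ℝ)..π, f (-x)) = ∫ x in (-π)..(0:ℝ), f x := by
    simpa only [neg_zero] using intervalIntegral.integral_comp_neg (a := (0:ℝ)) (b := π) f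
  have h1 : (∫ x in (-π)..(0:ℝ), f x) = ∫ x in (0:ℝ)..π, f x := by
    rw [← h0]
    exact intervalIntegral.integral_congr fun x _ => he x
  have hneg : (-π : ℝ) ≤ 0 := by linarith [pi_pos]
  have hnp : (-π : ℝ) ≤ π := by linarith [pi_pos]
  have h2 : IntervalIntegrable f volume (-π) 0 := by
    apply hf.mono_set
    rw [Set.uIcc_of_le hneg, Set.uIcc_of_le hnp]
    exact Set.Icc_subset_Icc le_rfl pi_pos.le
  have h3 : IntervalIntegrable f volume 0 π := by
    apply hf.mono_set
    rw [Set.uIcc_of_le pi_pos.le, Set.uIcc_of_le hnp]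
    exact Set.Icc_subset_Icc hneg le_rfl
  rw [← intervalIntegral.integral_add_adjacent_intervals h2 h3, h1]
  ring

lemma flip_int (f : ℝ → ℝ) : (∫ x in (0:ℝ)..π, f (π - x)) = ∫ x in (0:ℝ)..π, f x := by
  simpa using intervalIntegral.integral_comp_sub_left f π

lemma flip_cos (g : ℝ → ℝ) :
    (∫ x in (0:ℝ)..π, g (Real.cos x)) = ∫ x in (0:ℝ)..π, g (-Real.cos x) := by
  calc (∫ x in (0:ℝ)..π, g (Real.cos x))
      = ∫ x in (0:ℝ)..π, g (Real.cos (π - x)) := (flip_int fun x => g (Real.cos x)).symm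
    _ = ∫ x in (0:ℝ)..π, g (-Real.cos x) :=
        intervalIntegral.integral_congr fun x _ => by rw [Real.cos_pi_sub]

lemma contF {X : Type*} [TopologicalSpace X] {z : ℝ} (hz : z < 0) {u v : X → ℝ}
    (hu : Continuous u) (hv : Continuous v) (hub : ∀ p, |u p| ≤ 1) (hvb : ∀ p, |v p| ≤ 1) :
    Continuous fun p => Fc z (u p) (v p) := by
  simp only [Fc]
  apply Continuous.div (by fun_prop) (by fun_prop)
  intro p
  have h1 := abs_le.1 (hub p)
  have h2 := abs_le.1 (hvb p)
  have : 0 < 4 - z - 2 * u p - 2 * v p := by linarith [h1.1, h1.2, h2.1, h2.2]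
  exact this.ne'

lemma Gden1_pos {z c d : ℝ} (hz : z < 0) (hc : |c| ≤ 1) (hd : |d| ≤ 1) :
    0 < ((4 - z) / 2 - c) ^ 2 - d ^ 2 := by
  have h1 := abs_le.1 hc
  have h2 := abs_le.1 hd
  nlinarith [h1.1, h1.2, h2.1, h2.2]

lemma Gden2_pos {z c d : ℝ} (hz : z < 0) (hc : |c| ≤ 1) (hd : |d| ≤ 1) :
    0 < ((4 - z) / 2 + c) ^ 2 - d ^ 2 := by
  have h1 := abs_le.1 hc
  have h2 := abs_le.1 hd
  nlinarith [h1.1, h1.2, h2.1, h2.2]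

lemma contG {X : Type*} [TopologicalSpace X] {z : ℝ} (hz : z < 0) {u v : X → ℝ}
    (hu : Continuous u) (hv : Continuous v) (hub : ∀ p, |u p| ≤ 1) (hvb : ∀ p, |v p| ≤ 1) :
    Continuous fun p => Gc z (u p) (v p) := by
  simp only [Gc]
  apply Continuous.div
  · apply Continuous.div (by fun_prop) (by fun_prop)
    intro p
    exact (Gden1_pos hz (hub p) (hvb p)).ne'
  · fun_prop
  · intro p
    exact (Gden2_pos hz (hub p) (hvb p)).ne'

lemma alg {z : ℝ} (hz : z < 0) {c d : ℝ} (hc : |c| ≤ 1) (hd : |d| ≤ 1) :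
    (Fc z c d + Fc z c (-d) + Fc z (-c) d + Fc z (-c) (-d)) / 4 = Gc z c d := by
  have h1c := abs_le.1 hc
  have h1d := abs_le.1 hd
  have h1 : 4 - z - 2*c - 2*d > 0 := by linarith [h1c.1, h1c.2, h1d.1, h1d.2]
  have h2 : 4 - z + 2*c - 2*d > 0 := by linarith [h1c.1, h1c.2, h1d.1, h1d.2]
  have h3 : 4 - z - 2*c + 2*d > 0 := by linarith [h1c.1, h1c.2, h1d.1, h1d.2]
  have h4 : 4 - z + 2*c + 2*d > 0 := by linarith [h1c.1, h1c.2, h1d.1, h1d.2]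
  have h5 := Gden1_pos hz hc hd
  have h6 := Gden2_pos hz hc hd
  simp only [Fc, Gc]
  rw [div_div, div_eq_div_iff (by positivity) (by positivity)]
  have e1 : 4 - z - 2 * c - 2 * -d = 4 - z - 2*c + 2*d := by ring
  have e2 : 4 - z - 2 * -c - 2 * d = 4 - z + 2*c - 2*d := by ring
  have e3 : 4 - z - 2 * -c - 2 * -d = 4 - z + 2*c + 2*d := by ring
  rw [e1, e2, e3]
  field_simp
  ring

lemma Gc_nonneg {z : ℝ} (hz : z < 0) {c d : ℝ} (hc : |c| ≤ 1) (hd : |d| ≤ 1) :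
    0 ≤ Gc z c d := by
  have h5 := Gden1_pos hz hc hd
  have h6 := Gden2_pos hz hc hd
  have hnum : 0 ≤ (4 - z) * c ^ 2 * d ^ 2 :=
    mul_nonneg (mul_nonneg (by linarith) (sq_nonneg c)) (sq_nonneg d)
  simp only [Gc]
  exact div_nonneg (div_nonneg hnum h5.le) h6.le

lemma Gc_pos {z : ℝ} (hz : z < 0) {c d : ℝ} (hc : |c| ≤ 1) (hd : |d| ≤ 1)
    (hc0 : 0 < c) (hd0 : 0 < d) : 0 < Gc z c d := by
  have h5 := Gden1_pos hz hc hd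
  have h6 := Gden2_pos hz hc hd
  have hnum : 0 < (4 - z) * c ^ 2 * d ^ 2 :=
    mul_pos (mul_pos (by linarith) (pow_pos hc0 2)) (pow_pos hd0 2)
  simp only [Gc]
  exact div_pos (div_pos hnum h5) h6

lemma cont_param {f : ℝ → ℝ → ℝ} (hf : Continuous fun p : ℝ × ℝ => f p.1 p.2) :
    Continuous fun x => ∫ y in (0:ℝ)..π, f x y :=
  intervalIntegral.continuous_parametric_intervalIntegral_of_continuous' (μ := volume)
    (f := f) hf 0 π

end Stmt6Aux

open Stmt6Aux

theorem stmt_6 (z : ℝ) (hz : z < 0) :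
    0 < (1 / (8 * π ^ 2)) * ∫ p₁ in (-π)..π, ∫ p₂ in (-π)..π,
        (2 * Real.cos p₁ * Real.cos p₂) /
          (4 - z - 2 * Real.cos p₁ - 2 * Real.cos p₂) ∧
    (1 / (8 * π ^ 2)) * (∫ p₁ in (-π)..π, ∫ p₂ in (-π)..π,
        (2 * Real.cos p₁ * Real.cos p₂) /
          (4 - z - 2 * Real.cos p₁ - 2 * Real.cos p₂)) =
      (1 / (2 * π ^ 2)) * ∫ q₁ in (0:ℝ)..π, ∫ q₂ in (0:ℝ)..π,
        (4 - z) * (Real.cos q₁) ^ 2 * (Real.cos q₂) ^ 2 /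
          ((((4 - z) / 2 - Real.cos q₁) ^ 2 - (Real.cos q₂) ^ 2) *
            (((4 - z) / 2 + Real.cos q₁) ^ 2 - (Real.cos q₂) ^ 2)) := by
  have hπ := Real.pi_pos
  have habs : ∀ x : ℝ, |Real.cos x| ≤ 1 := fun x => Real.abs_cos_le_one x
  have habsn : ∀ x : ℝ, |-Real.cos x| ≤ 1 := fun x => by
    rw [abs_neg]; exact habs x
  -- basic continuity facts
  have cF1 : ∀ c : ℝ, |c| ≤ 1 → Continuous fun y => Fc z c (Real.cos y) := fun c hc =>
    contF hz continuous_const Real.continuous_cos (fun _ => hc) habs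
  have cF1' : ∀ c : ℝ, |c| ≤ 1 → Continuous fun y => Fc z c (-Real.cos y) := fun c hc =>
    contF hz continuous_const Real.continuous_cos.neg (fun _ => hc) habsn
  -- the four double-integrands, continuous jointly
  have cF2pp : Continuous fun p : ℝ × ℝ => Fc z (Real.cos p.1) (Real.cos p.2) :=
    contF hz (Real.continuous_cos.comp continuous_fst) (Real.continuous_cos.comp continuous_snd)
      (fun _ => habs _) (fun _ => habs _)
  have cF2pn : Continuous fun p : ℝ × ℝ => Fc z (Real.cos p.1) (-Real.cos p.2) :=
    contF hz (Real.continuous_cos.comp continuous_fst)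
      (Real.continuous_cos.comp continuous_snd).neg (fun _ => habs _) (fun _ => habsn _)
  have cF2np : Continuous fun p : ℝ × ℝ => Fc z (-Real.cos p.1) (Real.cos p.2) :=
    contF hz (Real.continuous_cos.comp continuous_fst).neg
      (Real.continuous_cos.comp continuous_snd) (fun _ => habsn _) (fun _ => habs _)
  have cF2nn : Continuous fun p : ℝ × ℝ => Fc z (-Real.cos p.1) (-Real.cos p.2) :=
    contF hz (Real.continuous_cos.comp continuous_fst).neg
      (Real.continuous_cos.comp continuous_snd).neg (fun _ => habsn _) (fun _ => habsn _)
  have cG2 : Continuous fun p : ℝ × ℝ => Gc z (Real.cos p.1) (Real.cos p.2) :=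
    contG hz (Real.continuous_cos.comp continuous_fst) (Real.continuous_cos.comp continuous_snd)
      (fun _ => habs _) (fun _ => habs _)
  -- parametric integrals (as functions of x) are continuous
  have cPhipp : Continuous fun x => ∫ y in (0:ℝ)..π, Fc z (Real.cos x) (Real.cos y) :=
    cont_param cF2pp
  have cPhipn : Continuous fun x => ∫ y in (0:ℝ)..π, Fc z (Real.cos x) (-Real.cos y) :=
    cont_param cF2pn
  have cPhinp : Continuous fun x => ∫ y in (0:ℝ)..π, Fc z (-Real.cos x) (Real.cos y) :=
    cont_param cF2np
  have cPhinn : Continuous fun x => ∫ y in (0:ℝ)..π, Fc z (-Real.cos x) (-Real.cos y) :=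
    cont_param cF2nn
  have cPsi : Continuous fun x => ∫ y in (0:ℝ)..π, Gc z (Real.cos x) (Real.cos y) :=
    cont_param cG2
  -- Step A : the full double integral equals 4 * I₁
  set I₁ : ℝ := ∫ x in (0:ℝ)..π, ∫ y in (0:ℝ)..π, Fc z (Real.cos x) (Real.cos y) with hI₁
  have stepA :
      (∫ p₁ in (-π)..π, ∫ p₂ in (-π)..π,
        (2 * Real.cos p₁ * Real.cos p₂) /
          (4 - z - 2 * Real.cos p₁ - 2 * Real.cos p₂)) = 4 * I₁ := by
    have hinner : ∀ x : ℝ,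
        (∫ y in (-π)..π, Fc z (Real.cos x) (Real.cos y))
          = 2 * ∫ y in (0:ℝ)..π, Fc z (Real.cos x) (Real.cos y) := by
      intro x
      exact even_int _ ((cF1 _ (habs x)).intervalIntegrable _ _)
        (fun y => by simp [Real.cos_neg])
    calc (∫ p₁ in (-π)..π, ∫ p₂ in (-π)..π,
            (2 * Real.cos p₁ * Real.cos p₂) /
              (4 - z - 2 * Real.cos p₁ - 2 * Real.cos p₂))
        = ∫ x in (-π)..π, 2 * ∫ y in (0:ℝ)..π, Fc z (Real.cos x) (Real.cos y) :=
          intervalIntegral.integral_congr fun x _ => hinner x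
      _ = 2 * ∫ x in (-π)..π, ∫ y in (0:ℝ)..π, Fc z (Real.cos x) (Real.cos y) :=
          intervalIntegral.integral_const_mul _ _
      _ = 2 * (2 * ∫ x in (0:ℝ)..π, ∫ y in (0:ℝ)..π, Fc z (Real.cos x) (Real.cos y)) := by
          rw [even_int _ (cPhipp.intervalIntegrable _ _) (fun x => by rw [Real.cos_neg])]
      _ = 4 * I₁ := by rw [hI₁]; ring
  -- Step B : I₁ equals the Gc double integral
  set T : ℝ := ∫ x in (0:ℝ)..π, ∫ y in (0:ℝ)..π, Gc z (Real.cos x) (Real.cos y) with hT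
  have E1 : I₁ = ∫ x in (0:ℝ)..π, ∫ y in (0:ℝ)..π, Fc z (Real.cos x) (-Real.cos y) := by
    apply intervalIntegral.integral_congr
    intro x _
    exact flip_cos (Fc z (Real.cos x))
  have E2 : I₁ = ∫ x in (0:ℝ)..π, ∫ y in (0:ℝ)..π, Fc z (-Real.cos x) (Real.cos y) :=
    flip_cos fun t => ∫ y in (0:ℝ)..π, Fc z t (Real.cos y)
  have E3 : I₁ = ∫ x in (0:ℝ)..π, ∫ y in (0:ℝ)..π, Fc z (-Real.cos x) (-Real.cos y) := by
    rw [E1]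
    exact flip_cos fun t => ∫ y in (0:ℝ)..π, Fc z t (-Real.cos y)
  have stepB : I₁ = T := by
    have esum : (∫ x in (0:ℝ)..π,
          ((∫ y in (0:ℝ)..π, Fc z (Real.cos x) (Real.cos y))
            + (∫ y in (0:ℝ)..π, Fc z (Real.cos x) (-Real.cos y))
            + (∫ y in (0:ℝ)..π, Fc z (-Real.cos x) (Real.cos y))
            + (∫ y in (0:ℝ)..π, Fc z (-Real.cos x) (-Real.cos y))))
        = (∫ x in (0:ℝ)..π, ∫ y in (0:ℝ)..π, Fc z (Real.cos x) (Real.cos y))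
          + (∫ x in (0:ℝ)..π, ∫ y in (0:ℝ)..π, Fc z (Real.cos x) (-Real.cos y))
          + (∫ x in (0:ℝ)..π, ∫ y in (0:ℝ)..π, Fc z (-Real.cos x) (Real.cos y))
          + (∫ x in (0:ℝ)..π, ∫ y in (0:ℝ)..π, Fc z (-Real.cos x) (-Real.cos y)) := by
      rw [intervalIntegral.integral_add
          (((cPhipp.fun_add cPhipn).fun_add cPhinp).intervalIntegrable _ _)
          (cPhinn.intervalIntegrable _ _),
        intervalIntegral.integral_add
          ((cPhipp.fun_add cPhipn).intervalIntegrable _ _)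
          (cPhinp.intervalIntegrable _ _),
        intervalIntegral.integral_add
          (cPhipp.intervalIntegrable _ _)
          (cPhipn.intervalIntegrable _ _)]
    have hsum : I₁ =
        (∫ x in (0:ℝ)..π,
          ((∫ y in (0:ℝ)..π, Fc z (Real.cos x) (Real.cos y))
            + (∫ y in (0:ℝ)..π, Fc z (Real.cos x) (-Real.cos y))
            + (∫ y in (0:ℝ)..π, Fc z (-Real.cos x) (Real.cos y))
            + (∫ y in (0:ℝ)..π, Fc z (-Real.cos x) (-Real.cos y)))) / 4 := by
      rw [esum, ← hI₁, ← E1, ← E2, ← E3]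
      ring
    rw [hsum, hT, ← intervalIntegral.integral_div]
    apply intervalIntegral.integral_congr
    intro x _
    dsimp only
    rw [← intervalIntegral.integral_add ((cF1 _ (habs x)).intervalIntegrable _ _)
        ((cF1' _ (habs x)).intervalIntegrable _ _),
      ← intervalIntegral.integral_add
        (((cF1 _ (habs x)).fun_add (cF1' _ (habs x))).intervalIntegrable _ _)
        ((cF1 _ (habsn x)).intervalIntegrable _ _),
      ← intervalIntegral.integral_add
        ((((cF1 _ (habs x)).fun_add (cF1' _ (habs x))).fun_add (cF1 _ (habsn x))).intervalIntegrable _ _)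
        ((cF1' _ (habsn x)).intervalIntegrable _ _),
      ← intervalIntegral.integral_div]
    apply intervalIntegral.integral_congr
    intro y _
    exact alg hz (habs x) (habs y)
  -- Step C : positivity of T
  have hpi3 : (0:ℝ) < π / 3 := by linarith
  have hpi3' : π / 3 ≤ π := by linarith
  have hpi2 : π / 3 < π / 2 := by linarith
  have hPsi_nonneg : ∀ x : ℝ, 0 ≤ ∫ y in (0:ℝ)..π, Gc z (Real.cos x) (Real.cos y) := by
    intro x
    apply intervalIntegral.integral_nonneg hπ.le
    intro y _
    exact Gc_nonneg hz (habs x) (habs y)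
  have hcospos : ∀ x : ℝ, x ∈ Set.Ioo (0:ℝ) (π / 3) → 0 < Real.cos x := by
    intro x hx
    apply Real.cos_pos_of_mem_Ioo
    constructor <;> [linarith [hx.1]; linarith [hx.2]]
  have hPsi_pos : ∀ x : ℝ, x ∈ Set.Ioo (0:ℝ) (π / 3) →
      0 < ∫ y in (0:ℝ)..π, Gc z (Real.cos x) (Real.cos y) := by
    intro x hx
    have hG1 : Continuous fun y => Gc z (Real.cos x) (Real.cos y) :=
      contG hz continuous_const Real.continuous_cos (fun _ => habs x) habs
    rw [← intervalIntegral.integral_add_adjacent_intervals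
      (hG1.intervalIntegrable 0 (π/3)) (hG1.intervalIntegrable (π/3) π)]
    have hfirst : 0 < ∫ y in (0:ℝ)..(π/3), Gc z (Real.cos x) (Real.cos y) := by
      apply intervalIntegral.intervalIntegral_pos_of_pos_on
        (hG1.intervalIntegrable 0 (π/3))
      · intro y hy
        exact Gc_pos hz (habs x) (habs y) (hcospos x hx) (hcospos y hy)
      · exact hpi3
    have hsecond : 0 ≤ ∫ y in (π/3)..π, Gc z (Real.cos x) (Real.cos y) := by
      apply intervalIntegral.integral_nonneg hpi3'
      intro y _
      exact Gc_nonneg hz (habs x) (habs y)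
    linarith
  have hT_pos : 0 < T := by
    rw [hT, ← intervalIntegral.integral_add_adjacent_intervals
      (cPsi.intervalIntegrable 0 (π/3)) (cPsi.intervalIntegrable (π/3) π)]
    have hfirst : 0 < ∫ x in (0:ℝ)..(π/3), ∫ y in (0:ℝ)..π, Gc z (Real.cos x) (Real.cos y) := by
      apply intervalIntegral.intervalIntegral_pos_of_pos_on
        (cPsi.intervalIntegrable 0 (π/3)) hPsi_pos hpi3
    have hsecond : 0 ≤ ∫ x in (π/3)..π, ∫ y in (0:ℝ)..π, Gc z (Real.cos x) (Real.cos y) := by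
      apply intervalIntegral.integral_nonneg hpi3'
      intro x _
      exact hPsi_nonneg x
    linarith
  -- Conclusion
  have hGmatch : T = ∫ q₁ in (0:ℝ)..π, ∫ q₂ in (0:ℝ)..π,
      (4 - z) * (Real.cos q₁) ^ 2 * (Real.cos q₂) ^ 2 /
        ((((4 - z) / 2 - Real.cos q₁) ^ 2 - (Real.cos q₂) ^ 2) *
          (((4 - z) / 2 + Real.cos q₁) ^ 2 - (Real.cos q₂) ^ 2)) := by
    rw [hT]
    apply intervalIntegral.integral_congr
    intro x _
    apply intervalIntegral.integral_congr
    intro y _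
    simp only [Gc, div_div]
  constructor
  · rw [stepA, stepB]
    have : 0 < (1 : ℝ) / (8 * π ^ 2) := by positivity
    positivity
  · rw [stepA, stepB, ← hGmatch]
    field_simp
    ring
end
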